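/- Let W_α be the unilateral weighted shift with weights α_i = 2 + (−1)^i. Then the mean transform of W_α is 2U₊, twice the unweighted unilateral shift, the spectral radius of W_α is √3, while ℓ(W_α) = 2; hence ℓ(W_α) ≠ r(W_α) and σ(W_α) = {λ : |λ| ≤ √3} ≠ σ(Ŵ_α) = {λ : |λ| ≤ 2}. -/

import Mathlib

/-!
Both operators are weighted shifts. The square of `W_α` is the shift by two with constant weight
`α_i α_{i+1} = 3`, so `‖W_α²‖ = 3` confines `σ(W_α)` to the disc of radius `√3`. Conversely, if
`z - W_α` were invertible, solving `(z - W_α) y = e₀` coordinatewise would give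
`z^(j+1) y_j = α_0 ⋯ α_(j-1)`, which is `3^(j/2)` for even `j`; for `|z| ≤ √3` this keeps
`|z| |y_j| ≥ 1` along the even indices, contradicting `y ∈ ℓ²`. The mean transform has the
constant weights `(3 + 1) / 2 = 2`, and the same two arguments give the disc of radius `2`.
The binomial averages `2⁻ⁿ ∑ C(n,j) α_(i+j)` equal `2` for `n ≥ 1` because the alternating
binomial sum vanishes.
-/

open Filter Topology

noncomputable def altWt (i : ℕ) : ℝ := 2 + (-1 : ℝ) ^ i

open Finset Metric
open scoped ENNReal

local notation "ℓ²" => lp (fun _ : ℕ => ℂ) 2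

lemma lp.single_two_eq_smul (i : ℕ) (c : ℂ) : lp.single 2 i c = c • (lp.single 2 i 1 : ℓ²) := by
  rw [← lp.single_smul, smul_eq_mul, mul_one]

instance : Nontrivial ℓ² :=
  ⟨⟨lp.single 2 0 (1 : ℂ), 0, fun h => by simpa using congrArg (fun f : ℓ² => f 0) h⟩⟩

lemma ContinuousLinearMap.ext_lp_single {F : Type*} [NormedAddCommGroup F] [NormedSpace ℂ F]
    {T S : ℓ² →L[ℂ] F} (h : ∀ i, T (lp.single 2 i 1) = S (lp.single 2 i 1)) : T = S := by
  ext f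
  have hsum := lp.hasSum_single (by norm_num) f
  refine (hsum.mapL T).unique ((hsum.mapL S).congr_fun fun i => ?_)
  simp only [lp.single_two_eq_smul i (f i), map_smul, h i]

lemma lp.norm_two_sq_eq_tsum (f : ℓ²) : ‖f‖ ^ 2 = ∑' i, ‖f i‖ ^ 2 := by
  exact_mod_cast lp.norm_rpow_eq_tsum (p := 2) (by norm_num) f

lemma lp.summable_norm_two_sq (f : ℓ²) : Summable fun i => ‖f i‖ ^ 2 := by
  exact_mod_cast (lp.memℓp f).summable (p := 2) (by norm_num)

def IsWeightedShift (T : ℓ² →L[ℂ] ℓ²) (m : ℕ) (w : ℕ → ℂ) : Prop :=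
  ∀ i, T (lp.single 2 i 1) = w i • lp.single 2 (i + m) 1

namespace IsWeightedShift

variable {T S : ℓ² →L[ℂ] ℓ²} {m k : ℕ} {v w : ℕ → ℂ}

lemma hasSum_apply (hT : IsWeightedShift T m w) (f : ℓ²) :
    HasSum (fun i => (f i * w i) • (lp.single 2 (i + m) 1 : ℓ²)) (T f) :=
  ((lp.hasSum_single (by norm_num) f).mapL T).congr_fun fun i => by
    rw [lp.single_two_eq_smul i (f i), map_smul, hT i, smul_smul]

lemma hasSum_apply_coord (hT : IsWeightedShift T m w) (f : ℓ²) (j : ℕ) :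
    HasSum (fun i => if j = i + m then f i * w i else 0) (T f j) := by
  refine ((lp.evalCLM (E := fun _ : ℕ => ℂ) ℂ 2 j).hasSum (hT.hasSum_apply f)).congr_fun
    fun i => ?_
  change _ = ((f i * w i) • (lp.single 2 (i + m) 1 : ℓ²)) j
  simp [lp.single_apply, Pi.single_apply]

lemma apply_of_lt (hT : IsWeightedShift T m w) (f : ℓ²) {j : ℕ} (hj : j < m) : T f j = 0 :=
  (hT.hasSum_apply_coord f j).unique (hasSum_zero.congr_fun fun i => by rw [if_neg (by omega)])

lemma apply_add (hT : IsWeightedShift T m w) (f : ℓ²) (j : ℕ) : T f (j + m) = w j * f j := by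
  rw [(hT.hasSum_apply_coord f (j + m)).unique ?_, mul_comm]
  refine (hasSum_ite_eq j (f j * w j)).congr_fun fun i => ?_
  rcases eq_or_ne i j with rfl | h
  · simp
  · simp [h, h.symm]

lemma mul (hS : IsWeightedShift S k w) (hT : IsWeightedShift T m v) :
    IsWeightedShift (S * T) (m + k) fun i => v i * w (i + m) := fun i => by
  rw [mul_apply_eq_comp, hT i, map_smul, hS, smul_smul, add_assoc]

lemma norm_sq_apply (hT : IsWeightedShift T m w) (f : ℓ²) :
    ‖T f‖ ^ 2 = ∑' i, ‖w i‖ ^ 2 * ‖f i‖ ^ 2 := by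
  rw [lp.norm_two_sq_eq_tsum, ← (lp.summable_norm_two_sq (T f)).sum_add_tsum_nat_add m,
    sum_eq_zero fun j hj => by rw [hT.apply_of_lt f (mem_range.1 hj), norm_zero, sq, zero_mul],
    zero_add]
  simp only [hT.apply_add, norm_mul, mul_pow]

lemma opNorm_le (hT : IsWeightedShift T m w) {C : ℝ} (hC : 0 ≤ C) (hw : ∀ i, ‖w i‖ ≤ C) :
    ‖T‖ ≤ C := by
  refine T.opNorm_le_bound hC fun f => ?_
  have hle : ∀ i, ‖w i‖ ^ 2 * ‖f i‖ ^ 2 ≤ C ^ 2 * ‖f i‖ ^ 2 := fun i => by gcongr; exact hw i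
  have hsum := (lp.summable_norm_two_sq f).mul_left (C ^ 2)
  refine (pow_le_pow_iff_left₀ (norm_nonneg _) (by positivity) two_ne_zero).1 ?_
  rw [hT.norm_sq_apply, mul_pow, lp.norm_two_sq_eq_tsum, ← tsum_mul_left]
  exact (hsum.of_nonneg_of_le (fun i => by positivity) hle).tsum_le_tsum hle hsum

lemma pow_succ_mul_apply_eq_prod (hT : IsWeightedShift T 1 w) {z : ℂ} {y : ℓ²}
    (hy : z • y - T y = lp.single 2 0 1) (j : ℕ) : z ^ (j + 1) * y j = ∏ i ∈ range j, w i := by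
  have hcoord : ∀ j, z * y j - T y j = (lp.single 2 0 1 : ℓ²) j := fun j => by
    simpa only [lp.coeFn_sub, lp.coeFn_smul, Pi.sub_apply, Pi.smul_apply, smul_eq_mul]
      using congrArg (fun g : ℓ² => g j) hy
  induction j with
  | zero => simpa [hT.apply_of_lt y zero_lt_one] using hcoord 0
  | succ j ih =>
    have h := hcoord (j + 1)
    rw [hT.apply_add, lp.single_apply_ne 2 0 1 j.succ_ne_zero] at h
    rw [prod_range_succ, ← ih]
    linear_combination z ^ (j + 1) * h

lemma closedBall_subset_spectrum (hT : IsWeightedShift T 1 w) {r : ℝ}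
    (hr : ∃ᶠ n in atTop, r ^ n ≤ ‖∏ i ∈ range n, w i‖) : closedBall 0 r ⊆ spectrum ℂ T := by
  intro z hz
  rw [mem_closedBall, dist_zero_right] at hz
  by_contra hzT
  obtain ⟨y, hy⟩ := (ContinuousLinearMap.isUnit_iff_bijective.1
    (spectrum.notMem_iff.1 hzT)).2 (lp.single 2 0 1)
  replace hy : z • y - T y = lp.single 2 0 1 := by
    simpa [Algebra.algebraMap_eq_smul_one] using hy
  have hprod := hT.pow_succ_mul_apply_eq_prod hy
  have hz0 : 0 < ‖z‖ := norm_pos_iff.2 (left_ne_zero_of_mul_eq_one (by simpa using hprod 0))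
  have hlarge : ∃ᶠ n in atTop, 1 ≤ ‖z‖ ^ 2 * ‖y n‖ ^ 2 := hr.mono fun n hn => by
    have h : ‖z‖ ^ n ≤ ‖z‖ ^ n * (‖z‖ * ‖y n‖) :=
      calc ‖z‖ ^ n ≤ r ^ n := by gcongr
      _ ≤ ‖∏ i ∈ range n, w i‖ := hn
      _ = ‖z‖ ^ n * (‖z‖ * ‖y n‖) := by rw [← hprod n, norm_mul, norm_pow, pow_succ, mul_assoc]
    rw [← mul_pow]
    exact one_le_pow₀ ((le_mul_iff_one_le_right (by positivity)).1 h)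
  have hsmall : ∀ᶠ n in atTop, ‖z‖ ^ 2 * ‖y n‖ ^ 2 < 1 := by
    have h := (lp.summable_norm_two_sq y).tendsto_atTop_zero.const_mul (‖z‖ ^ 2)
    rw [mul_zero] at h
    exact h.eventually (gt_mem_nhds one_pos)
  obtain ⟨n, hn, hn'⟩ := (hlarge.and_eventually hsmall).exists
  exact hn'.not_ge hn

end IsWeightedShift

lemma spectrum_subset_closedBall_of_norm_pow_le {𝕜 A : Type*} [NormedField 𝕜] [NormedRing A]
    [NormedAlgebra 𝕜 A] [CompleteSpace A] [NormOneClass A] {a : A} {n : ℕ} (hn : n ≠ 0)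
    {r : ℝ} (hr : 0 ≤ r) (h : ‖a ^ n‖ ≤ r ^ n) : spectrum 𝕜 a ⊆ closedBall 0 r := fun z hz => by
  rw [mem_closedBall, dist_zero_right]
  refine (pow_le_pow_iff_left₀ (norm_nonneg z) hr hn).1 ?_
  rw [← norm_pow]
  exact (spectrum.norm_le_norm_of_mem (spectrum.pow_mem_pow a n hz)).trans h

lemma spectralRadius_eq_of_spectrum_eq_closedBall {A : Type*} [Ring A] [Algebra ℂ A] {a : A}
    {r : ℝ} (hr : 0 ≤ r) (h : spectrum ℂ a = closedBall 0 r) :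
    spectralRadius ℂ a = ENNReal.ofReal r := by
  refine le_antisymm (iSup₂_le fun z hz => ?_) ?_
  · rw [h, mem_closedBall, dist_zero_right] at hz
    rw [← enorm_eq_nnnorm, ← ofReal_norm]
    exact ENNReal.ofReal_le_ofReal hz
  · have hmem : (r : ℂ) ∈ spectrum ℂ a := by simp [h, abs_of_nonneg hr]
    calc ENNReal.ofReal r = ‖(r : ℂ)‖₊ := by
          rw [← enorm_eq_nnnorm, ← ofReal_norm, Complex.norm_real, Real.norm_of_nonneg hr]
    _ ≤ spectralRadius ℂ a := le_iSup₂ (α := ℝ≥0∞) (r : ℂ) hmem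

lemma altWt_mul_altWt_succ (i : ℕ) : altWt i * altWt (i + 1) = 3 := by
  have h : ((-1 : ℝ) ^ i) ^ 2 = 1 := by rw [← pow_mul, mul_comm, pow_mul, neg_one_sq, one_pow]
  simp only [altWt, pow_succ]
  linear_combination -h

lemma altWt_add_altWt_succ (i : ℕ) : altWt i + altWt (i + 1) = 4 := by
  simp only [altWt, pow_succ]
  ring

lemma prod_range_two_mul_altWt (n : ℕ) : ∏ i ∈ range (2 * n), altWt i = 3 ^ n := by
  induction n with
  | zero => simp
  | succ n ih =>
    rw [mul_add_one, prod_range_succ, prod_range_succ, ih, mul_assoc, altWt_mul_altWt_succ,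
      pow_succ]

lemma sum_range_choose_mul_altWt {n : ℕ} (hn : n ≠ 0) (i : ℕ) :
    ∑ j ∈ range (n + 1), (n.choose j : ℝ) * altWt (i + j) = 2 ^ (n + 1) := by
  have hchoose : ∑ j ∈ range (n + 1), (n.choose j : ℝ) = 2 ^ n := by
    exact_mod_cast Nat.sum_range_choose n
  have halt : ∑ j ∈ range (n + 1), (-1 : ℝ) ^ j * n.choose j = 0 := by
    exact_mod_cast (Int.alternating_sum_range_choose (n := n)).trans (if_neg hn)
  calc ∑ j ∈ range (n + 1), (n.choose j : ℝ) * altWt (i + j)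
      = 2 * ∑ j ∈ range (n + 1), (n.choose j : ℝ)
        + (-1) ^ i * ∑ j ∈ range (n + 1), (-1 : ℝ) ^ j * n.choose j := by
        simp only [mul_sum, ← sum_add_distrib]
        exact sum_congr rfl fun j _ => by rw [altWt, pow_add]; ring
    _ = 2 ^ (n + 1) := by rw [hchoose, halt, pow_succ]; ring

theorem mean_limit_ne_spectral_radius_example
    (W U What : lp (fun _ : ℕ => ℂ) 2 →L[ℂ] lp (fun _ : ℕ => ℂ) 2)
    (hW : ∀ i : ℕ, W (lp.single 2 i 1) = (altWt i : ℂ) • lp.single 2 (i + 1) 1)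
    (hU : ∀ i : ℕ, U (lp.single 2 i 1) = lp.single 2 (i + 1) 1)
    (hWhat : ∀ i : ℕ, What (lp.single 2 i 1) =
      (((altWt i + altWt (i + 1)) / 2 : ℝ) : ℂ) • lp.single 2 (i + 1) 1) :
    What = (2 : ℂ) • U ∧
    (spectralRadius ℂ W).toReal = Real.sqrt 3 ∧
    spectrum ℂ W = Metric.closedBall (0 : ℂ) (Real.sqrt 3) ∧
    spectrum ℂ What = Metric.closedBall (0 : ℂ) 2 ∧
    Tendsto
      (fun n : ℕ => ⨆ i : ℕ,
        ((2 : ℝ) ^ n)⁻¹ * ∑ j ∈ Finset.range (n + 1), (n.choose j : ℝ) * altWt (i + j))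
      atTop (nhds 2) ∧
    (2 : ℝ) ≠ Real.sqrt 3 := by
  have hWs : IsWeightedShift W 1 fun i => (altWt i : ℂ) := hW
  have hWhat2 : IsWeightedShift What 1 fun _ => 2 := fun i => by
    rw [hWhat, altWt_add_altWt_succ]
    norm_num
  have hW2 : IsWeightedShift (W ^ 2) 2 fun _ => 3 := fun i => by
    rw [sq, hWs.mul hWs i]
    simp only [← Complex.ofReal_mul, altWt_mul_altWt_succ]
    norm_num
  have hsqrt3 : 0 ≤ √3 := Real.sqrt_nonneg 3
  have hspecW : spectrum ℂ W = closedBall 0 √3 := by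
    refine subset_antisymm (spectrum_subset_closedBall_of_norm_pow_le two_ne_zero hsqrt3 ?_)
      (hWs.closedBall_subset_spectrum (frequently_atTop.2 fun N => ⟨2 * N, by omega, ?_⟩))
    · rw [Real.sq_sqrt zero_le_three]
      exact hW2.opNorm_le zero_le_three fun _ => by norm_num
    · rw [← Complex.ofReal_prod, Complex.norm_real, prod_range_two_mul_altWt, pow_mul,
        Real.sq_sqrt zero_le_three, Real.norm_of_nonneg (by positivity)]
  have hspecWhat : spectrum ℂ What = closedBall 0 2 := by
    refine subset_antisymm (spectrum_subset_closedBall_of_norm_pow_le one_ne_zero zero_le_two ?_)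
      (hWhat2.closedBall_subset_spectrum (Frequently.of_forall fun n => by simp))
    rw [pow_one, pow_one]
    exact hWhat2.opNorm_le zero_le_two fun _ => by norm_num
  refine ⟨ContinuousLinearMap.ext_lp_single fun i => ?_, ?_, hspecW, hspecWhat, ?_, ?_⟩
  · rw [hWhat2 i, smul_apply, hU]
  · rw [spectralRadius_eq_of_spectrum_eq_closedBall hsqrt3 hspecW, ENNReal.toReal_ofReal hsqrt3]
  · refine tendsto_const_nhds.congr' ((eventually_ne_atTop 0).mono fun n hn => ?_)
    simp only [sum_range_choose_mul_altWt hn, pow_succ,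
      inv_mul_cancel_left₀ (by positivity : (2 : ℝ) ^ n ≠ 0), ciSup_const]
  · exact ((Real.sqrt_lt' two_pos).2 (by norm_num)).ne'
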